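/- arXiv:1808.09567 — 2 statements merged into one kernel-verified Lean document; each statement's English description precedes it below -/
import Mathlib

section
/- Let S be a semitopological monoid with open left shifts (or open right shifts) and let ~ be a congruence on S. Then S/~ with the quotient topology is Hausdorff if and only if ~ is closed in S × S. -/
/-!
The quotient map `S → S/~` is open: if `x ~ u` with `u` in an open set `U`, then with open left
shifts the image of the open set `{s | u * s ∈ U}` under `x * ·` is a neighbourhood of `x = x * 1`
whose points `x * s` are congruent to `u * s ∈ U` (symmetrically for right shifts). The target of
an open quotient map `π` is Hausdorff iff the relation `π a = π b` is closed, and here that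
relation is `~` itself.
-/

theorem Setoid.isOpenMap_mk_of_forall_rel_exists {X : Type*} [TopologicalSpace X] (r : Setoid X)
    (h : ∀ x u, r x u → ∃ (p : X) (φ ψ : X → X), Continuous φ ∧ IsOpenMap ψ ∧
      φ p = u ∧ ψ p = x ∧ ∀ s, r (ψ s) (φ s)) :
    IsOpenMap (Quotient.mk r) := by
  intro U hU
  rw [isOpen_coinduced, isOpen_iff_mem_nhds]
  rintro x ⟨u, huU, hux⟩
  obtain ⟨p, φ, ψ, hφ, hψ, rfl, rfl, hrel⟩ := h x u (r.symm (Quotient.exact hux))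
  refine Filter.mem_of_superset ((hψ _ (hU.preimage hφ)).mem_nhds ⟨p, huU, rfl⟩) ?_
  rintro _ ⟨s, hs, rfl⟩
  exact ⟨φ s, hs, Quotient.sound (r.symm (hrel s))⟩

namespace Con

variable {S : Type*} [Monoid S] [TopologicalSpace S] (c : Con S)

theorem isOpenMap_mk_of_mul_left (hcont : ∀ a : S, Continuous (a * ·))
    (hopen : ∀ a : S, IsOpenMap (a * ·)) : IsOpenMap (Quotient.mk c.toSetoid) :=
  c.toSetoid.isOpenMap_mk_of_forall_rel_exists fun x u hxu =>
    ⟨1, (u * ·), (x * ·), hcont u, hopen x, mul_one u, mul_one x, fun s => c.mul hxu (c.refl s)⟩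

theorem isOpenMap_mk_of_mul_right (hcont : ∀ a : S, Continuous (· * a))
    (hopen : ∀ a : S, IsOpenMap (· * a)) : IsOpenMap (Quotient.mk c.toSetoid) :=
  c.toSetoid.isOpenMap_mk_of_forall_rel_exists fun x u hxu =>
    ⟨1, (· * u), (· * x), hcont u, hopen x, one_mul u, one_mul x, fun s => c.mul (c.refl s) hxu⟩

end Con

/-- Let S be a semitopological monoid with open left (or right) shifts, and ~ a
congruence on S. Then S/~ with the quotient topology is Hausdorff iff ~ is closed
in S × S. -/
theorem stmt_3 {S : Type*} [Monoid S] [TopologicalSpace S]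
    (hcont : ∀ a : S, Continuous (fun x => a * x) ∧ Continuous (fun x => x * a))
    (hopen : (∀ a : S, IsOpenMap (fun x => a * x)) ∨ (∀ a : S, IsOpenMap (fun x => x * a)))
    (c : Con S) :
    T2Space (Quotient c.toSetoid) ↔ IsClosed {p : S × S | c p.1 p.2} := by
  have hmk : IsOpenMap (Quotient.mk c.toSetoid) :=
    hopen.elim (c.isOpenMap_mk_of_mul_left fun a => (hcont a).1)
      (c.isOpenMap_mk_of_mul_right fun a => (hcont a).2)
  rw [t2Space_iff_of_isOpenQuotientMap ⟨Quotient.mk_surjective, continuous_quotient_mk', hmk⟩]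
  simp only [Quotient.eq]
  rfl
end

section
/- Let S be a topological monoid with open shifts. Then S is quasiregular, i.e., the semiregularization S_sr is a T₃ (regular) space: for every regular open set U in S and every x ∈ U, there is a regular open set W with x ∈ W and Cl(W) ⊆ U (closure in S_sr). -/
/-!
Given `x ∈ U` with `U` regular open, continuity of multiplication gives an open `V ∋ 1` with
`x V V ⊆ U`. For `y ∈ Cl(x V)` and `v ∈ V`, right multiplication puts `y v` in `Cl(x V V) ⊆ Cl U`;
since `y V` is an open neighbourhood of `y`, this gives `y ∈ Int Cl U = U`. So `W = Int Cl(x V)`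
works: for open sets the closure in `S_sr` agrees with the ordinary one.
-/

open Topology Pointwise

/-- The semiregularization topology: generated by the regular open sets. -/
def srTop (X : Type*) [TopologicalSpace X] : TopologicalSpace X :=
  TopologicalSpace.generateFrom {U : Set X | interior (closure U) = U}

section Semiregularization

variable {X : Type*} [TopologicalSpace X]

theorem isOpen_srTop_interior_closure (s : Set X) :
    IsOpen[srTop X] (interior (closure s)) :=
  .basic _ interior_closure_idem

theorem closure_srTop_subset_closure {W : Set X} (hW : IsOpen W) :
    @closure X (srTop X) W ⊆ closure W := by
  intro y hy
  by_contra hyW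
  -- `Int Cl (X \ Cl W)` is a regular open neighbourhood of `y` missing `W`.
  have hyN : y ∈ interior (closure (closure W)ᶜ) :=
    isClosed_closure.isOpen_compl.subset_interior_closure hyW
  have hNW : interior (closure (closure W)ᶜ) ⊆ Wᶜ := by
    rw [closure_compl]
    exact interior_subset.trans (Set.compl_subset_compl.mpr hW.subset_interior_closure)
  obtain ⟨z, hzN, hzW⟩ :=
    (@mem_closure_iff X (srTop X) _ _).mp hy _ (isOpen_srTop_interior_closure _) hyN
  exact hNW hzN hzW

end Semiregularization

section Monoid

variable {M : Type*} [Monoid M] [TopologicalSpace M] [ContinuousMul M]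

theorem exists_isOpen_one_mem_smul_mul_subset {U : Set M} (hU : IsOpen U) {x : M}
    (hx : x ∈ U) : ∃ V : Set M, IsOpen V ∧ (1 : M) ∈ V ∧ x • V * V ⊆ U := by
  have hpre : (x * ·) ⁻¹' U ∈ 𝓝 (1 : M) :=
    (continuous_const_mul x).continuousAt.preimage_mem_nhds (by simpa using hU.mem_nhds hx)
  obtain ⟨V, hV, h1, hVV⟩ := exists_open_nhds_one_mul_subset hpre
  refine ⟨V, hV, h1, ?_⟩
  rw [smul_mul_assoc]
  exact (Set.smul_set_mono hVV).trans (Set.image_preimage_subset _ _)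

theorem closure_subset_interior_closure_mul (hleft : ∀ a : M, IsOpenMap (a * ·)) (A : Set M)
    {V : Set M} (hV : IsOpen V) (h1 : (1 : M) ∈ V) :
    closure A ⊆ interior (closure (A * V)) := by
  intro y hy
  have hyV : y • V ⊆ closure (A * V) := by
    rintro _ ⟨v, hv, rfl⟩
    refine closure_mono ?_ (image_closure_subset_closure_image (continuous_mul_const v) ⟨y, hy, rfl⟩)
    rintro _ ⟨a, ha, rfl⟩
    exact Set.mul_mem_mul ha hv
  exact interior_maximal hyV (hleft y V hV) ⟨1, h1, mul_one y⟩

end Monoid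

/-- Let S be a topological monoid with open shifts. Then S is quasiregular: for
every regular open set U and every x ∈ U there is a regular open W with x ∈ W and
Cl(W) ⊆ U, the closure taken in the semiregularization S_sr. -/
theorem stmt_7 {S : Type*} [Monoid S] [TopologicalSpace S]
    (hmul : Continuous fun p : S × S => p.1 * p.2)
    (hshift : ∀ a : S, IsOpenMap (fun x => a * x) ∧ IsOpenMap (fun x => x * a)) :
    ∀ U : Set S, interior (closure U) = U → ∀ x ∈ U,
      ∃ W : Set S, interior (closure W) = W ∧ x ∈ W ∧ @closure S (srTop S) W ⊆ U := by
  have : ContinuousMul S := ⟨hmul⟩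
  intro U hU x hx
  obtain ⟨V, hV, h1, hxVV⟩ := exists_isOpen_one_mem_smul_mul_subset (hU ▸ isOpen_interior) hx
  have hxV : IsOpen (x • V) := (hshift x).1 V hV
  refine ⟨interior (closure (x • V)), interior_closure_idem,
    hxV.subset_interior_closure ⟨1, h1, mul_one x⟩, ?_⟩
  calc @closure S (srTop S) (interior (closure (x • V)))
      _ ⊆ closure (interior (closure (x • V))) := closure_srTop_subset_closure isOpen_interior
      _ ⊆ closure (x • V) := isClosed_closure.closure_interior_subset
      _ ⊆ interior (closure (x • V * V)) :=
        closure_subset_interior_closure_mul (fun a => (hshift a).1) _ hV h1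
      _ ⊆ interior (closure U) := interior_mono (closure_mono hxVV)
      _ = U := hU
end
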